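/- arXiv:2605.20040 — 3 statements merged into one kernel-verified Lean document; each statement's English description precedes it below -/
import Mathlib

section
/- Let p be a positive probability vector in R^k, α ∈ (0,1], and let c* be the unique solution of Σ_j max((1−α)p_j, c·p_j^{2/3}) = 1. Then the vector q with q_j = max((1−α)p_j, c*·p_j^{2/3}) is the unique minimizer of S_p(q) = Σ_j p_j/sqrt(q_j) over vectors q in the probability simplex satisfying q_j ≥ (1−α)p_j for all j. -/
/-!
The objective `∑ j, p j / √(q j)` is separable and strictly convex, so the KKT conditions are
sufficient. With the multiplier `λ = 1 / (2 c √c)`, the marginal gain `p j / (2 (q j)^{3/2})` of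
the proposed `q` equals `λ` where `q j = c (p j)^{2/3}` (the lower bound is slack) and is at most
`λ` where `q j = (1 - α) p j` (there any feasible `q'` can only increase `q j`). Summing the
tangent-line inequalities of `x ↦ P / √x` at `q j` then gives `S_p(q) ≤ S_p(q')`, strictly as
soon as `q' ≠ q`, since the budget terms `λ (q j - q' j)` cancel.
-/

open Finset Real

section Tangent

variable {P a b : ℝ}

lemma div_sqrt_sub_tangent_eq (ha : 0 < a) (hb : 0 < b) :
    P / √b - (P / √a + P / (2 * a * √a) * (a - b))
      = P * (√b - √a) ^ 2 * (√b + 2 * √a) / (2 * a * √a * √b) := by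
  obtain ⟨u, hu, rfl⟩ : ∃ u, 0 < u ∧ u ^ 2 = a := ⟨√a, sqrt_pos.2 ha, sq_sqrt ha.le⟩
  obtain ⟨v, hv, rfl⟩ : ∃ v, 0 < v ∧ v ^ 2 = b := ⟨√b, sqrt_pos.2 hb, sq_sqrt hb.le⟩
  rw [sqrt_sq hu.le, sqrt_sq hv.le]
  field_simp
  ring

lemma div_sqrt_tangent_le (hP : 0 ≤ P) (ha : 0 < a) (hb : 0 < b) :
    P / √a + P / (2 * a * √a) * (a - b) ≤ P / √b := by
  have h := div_sqrt_sub_tangent_eq (P := P) ha hb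
  have : 0 ≤ P * (√b - √a) ^ 2 * (√b + 2 * √a) / (2 * a * √a * √b) := by positivity
  linarith

lemma div_sqrt_tangent_lt (hP : 0 < P) (ha : 0 < a) (hb : 0 < b) (hab : a ≠ b) :
    P / √a + P / (2 * a * √a) * (a - b) < P / √b := by
  have h := div_sqrt_sub_tangent_eq (P := P) ha hb
  have hsqrt : √b - √a ≠ 0 := sub_ne_zero.2 fun h ↦ hab ((sqrt_inj ha.le hb.le).1 h.symm)
  have : 0 < P * (√b - √a) ^ 2 * (√b + 2 * √a) / (2 * a * √a * √b) := by
    have := sqrt_pos.2 ha; have := sqrt_pos.2 hb; positivity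
  linarith

end Tangent

lemma mul_rpow_two_thirds_mul_sqrt {c x : ℝ} (hc : 0 ≤ c) (hx : 0 ≤ x) :
    c * x ^ ((2 : ℝ) / 3) * √(c * x ^ ((2 : ℝ) / 3)) = c * √c * x := by
  rw [sqrt_mul hc, sqrt_eq_rpow (x ^ _), ← rpow_mul hx]
  calc c * x ^ ((2 : ℝ) / 3) * (√c * x ^ ((2 : ℝ) / 3 * (1 / 2)))
      = c * √c * x ^ ((2 : ℝ) / 3 + 2 / 3 * (1 / 2)) := by rw [rpow_add' hx (by norm_num)]; ring
    _ = c * √c * x := by norm_num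

/-- The KKT condition of the budgeted problem at `q = max l (c p^{2/3})`, with multiplier
`(2 c √c)⁻¹`, tested against a feasible `y ≥ l`. -/
lemma inv_mul_sub_le_marginal_mul_sub {p l c q y : ℝ} (hp : 0 < p) (hc : 0 < c)
    (hq : q = max l (c * p ^ ((2 : ℝ) / 3))) (hy : l ≤ y) :
    (2 * (c * √c))⁻¹ * (q - y) ≤ p / (2 * q * √q) * (q - y) := by
  have hcube := mul_rpow_two_thirds_mul_sqrt hc.le hp.le
  have hfree : c * p ^ ((2 : ℝ) / 3) ≤ q := hq ▸ le_max_right _ _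
  have hfree_pos : 0 < c * p ^ ((2 : ℝ) / 3) := by positivity
  rcases max_choice l (c * p ^ ((2 : ℝ) / 3)) with h | h
  · have hmarginal : p / (2 * q * √q) ≤ (2 * (c * √c))⁻¹ := by
      calc p / (2 * q * √q) ≤ p / (2 * (c * √c * p)) := by
            rw [mul_assoc, ← hcube]
            have := hfree_pos.trans_le hfree
            gcongr
        _ = (2 * (c * √c))⁻¹ := by field_simp
    exact mul_le_mul_of_nonpos_right hmarginal (by rw [hq, h]; linarith)
  · have hmarginal : p / (2 * q * √q) = (2 * (c * √c))⁻¹ := by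
      rw [hq, h, mul_assoc, hcube]
      field_simp
    rw [hmarginal]

section BudgetSum

variable {ι : Type*} [Fintype ι] {F G x y : ι → ℝ} {lam : ℝ}

lemma sum_add_mul_sub_eq (hxy : ∑ j, x j = ∑ j, y j) :
    ∑ j, (F j + lam * (x j - y j)) = ∑ j, F j := by
  rw [sum_add_distrib, ← mul_sum, sum_sub_distrib, hxy, sub_self, mul_zero, add_zero]

lemma sum_le_sum_of_add_mul_sub_le (hxy : ∑ j, x j = ∑ j, y j)
    (h : ∀ j, F j + lam * (x j - y j) ≤ G j) : ∑ j, F j ≤ ∑ j, G j :=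
  sum_add_mul_sub_eq hxy ▸ sum_le_sum fun j _ ↦ h j

lemma eq_of_sum_eq_of_add_mul_sub_le (hxy : ∑ j, x j = ∑ j, y j)
    (h : ∀ j, F j + lam * (x j - y j) ≤ G j)
    (hlt : ∀ j, y j ≠ x j → F j + lam * (x j - y j) < G j)
    (hFG : ∑ j, G j = ∑ j, F j) : y = x := by
  by_contra hne
  obtain ⟨j, hj⟩ := Function.ne_iff.1 hne
  have := sum_lt_sum (s := univ) (fun j _ ↦ h j) ⟨j, mem_univ _, hlt j hj⟩
  rw [sum_add_mul_sub_eq hxy] at this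
  linarith

end BudgetSum

lemma pos_of_sum_max_rpow_eq_one {ι : Type*} [Fintype ι] {p : ι → ℝ} {α c : ℝ}
    (hp : ∀ j, 0 < p j) (hpsum : ∑ j, p j = 1) (hα : 0 < α)
    (hc : ∑ j, max ((1 - α) * p j) (c * p j ^ ((2 : ℝ) / 3)) = 1) : 0 < c := by
  by_contra! hc0
  have hterm : ∀ j, max ((1 - α) * p j) (c * p j ^ ((2 : ℝ) / 3)) ≤ max (1 - α) 0 * p j := by
    intro j
    rw [max_mul_of_nonneg _ _ (hp j).le, zero_mul]
    exact max_le_max le_rfl (mul_nonpos_of_nonpos_of_nonneg hc0 (rpow_nonneg (hp j).le _))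
  have := sum_le_sum fun j (_ : j ∈ univ) ↦ hterm j
  rw [hc, ← mul_sum, hpsum, mul_one] at this
  have : max (1 - α) 0 < 1 := max_lt (by linarith) one_pos
  linarith

theorem budgeted_optimal_allocation_general {k : ℕ} (p : Fin k → ℝ)
    (hp : ∀ j, 0 < p j) (hpsum : ∑ j, p j = 1) (α : ℝ) (hα0 : 0 < α)
    (c : ℝ)
    (hc : ∑ j, max ((1 - α) * p j) (c * (p j) ^ ((2:ℝ)/3)) = 1) :
    let q : Fin k → ℝ := fun j => max ((1 - α) * p j) (c * (p j) ^ ((2:ℝ)/3))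
    (∀ j, 0 < q j) ∧ (∑ j, q j = 1) ∧ (∀ j, (1 - α) * p j ≤ q j) ∧
    (∀ q' : Fin k → ℝ, (∀ j, 0 < q' j) → (∑ j, q' j = 1) →
      (∀ j, (1 - α) * p j ≤ q' j) →
      (∑ j, p j / Real.sqrt (q j)) ≤ ∑ j, p j / Real.sqrt (q' j) ∧
      ((∑ j, p j / Real.sqrt (q' j)) = (∑ j, p j / Real.sqrt (q j)) → q' = q)) := by
  intro q
  have hcpos := pos_of_sum_max_rpow_eq_one hp hpsum hα0 hc
  have hqpos : ∀ j, 0 < q j := fun j ↦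
    (mul_pos hcpos (rpow_pos_of_pos (hp j) _)).trans_le (le_max_right _ _)
  refine ⟨hqpos, hc, fun j ↦ le_max_left _ _, fun q' hq'pos hq'sum hq'lb ↦ ?_⟩
  have hkkt j := inv_mul_sub_le_marginal_mul_sub (hp j) hcpos rfl (hq'lb j)
  have hbudget : ∑ j, q j = ∑ j, q' j := hc.trans hq'sum.symm
  have hle j : p j / √(q j) + (2 * (c * √c))⁻¹ * (q j - q' j) ≤ p j / √(q' j) :=
    (add_le_add_right (hkkt j) _).trans (div_sqrt_tangent_le (hp j).le (hqpos j) (hq'pos j))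
  have hlt j (hj : q' j ≠ q j) :
      p j / √(q j) + (2 * (c * √c))⁻¹ * (q j - q' j) < p j / √(q' j) :=
    (add_le_add_right (hkkt j) _).trans_lt
      (div_sqrt_tangent_lt (hp j) (hqpos j) (hq'pos j) (Ne.symm hj))
  exact ⟨sum_le_sum_of_add_mul_sub_le hbudget hle,
    eq_of_sum_eq_of_add_mul_sub_le hbudget hle hlt⟩

/-- The budgeted optimal allocation: if `c*` solves `∑ j, max((1-α) p j, c* (p j)^(2/3)) = 1`,
then `q j = max((1-α) p j, c* (p j)^(2/3))` is the unique minimizer of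
`S_p(q) = ∑ j, p j / √(q j)` over positive simplex vectors with `q j ≥ (1-α) p j`. -/
theorem budgeted_optimal_allocation {k : ℕ} (p : Fin k → ℝ)
    (hp : ∀ j, 0 < p j) (hpsum : ∑ j, p j = 1) (α : ℝ) (hα0 : 0 < α) (hα1 : α ≤ 1)
    (c : ℝ) (hc0 : 0 ≤ c)
    (hc : ∑ j, max ((1 - α) * p j) (c * (p j) ^ ((2:ℝ)/3)) = 1) :
    let q : Fin k → ℝ := fun j => max ((1 - α) * p j) (c * (p j) ^ ((2:ℝ)/3))
    (∀ j, 0 < q j) ∧ (∑ j, q j = 1) ∧ (∀ j, (1 - α) * p j ≤ q j) ∧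
    (∀ q' : Fin k → ℝ, (∀ j, 0 < q' j) → (∑ j, q' j = 1) →
      (∀ j, (1 - α) * p j ≤ q' j) →
      (∑ j, p j / Real.sqrt (q j)) ≤ ∑ j, p j / Real.sqrt (q' j) ∧
      ((∑ j, p j / Real.sqrt (q' j)) = (∑ j, p j / Real.sqrt (q j)) → q' = q)) :=
  budgeted_optimal_allocation_general p hp hpsum α hα0 c hc
end

section
/- Let p be a positive probability vector in R^k, let p_max = max_j p_j, and define α_min(p) = 1 − p_max^{−1/3} / (Σ_j p_j^{2/3}). Then for every α with α_min(p) ≤ α ≤ 1, the vector q* with q*_j = p_j^{2/3}/(Σ_ℓ p_ℓ^{2/3}) satisfies q*_j ≥ (1−α) p_j for all j, and hence the minimum of S_p(q) = Σ_j p_j/sqrt(q_j) over {q in the simplex : q_j ≥ (1−α)p_j ∀j} equals (Σ_j p_j^{2/3})^{3/2}. -/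
open Finset Real

/-! Hölder's inequality with exponents `3/2` and `3`, applied to `p^{2/3} = (p/√q)^{2/3} · q^{1/3}`,
gives `(∑ p^{2/3})^{3/2} ≤ ∑ p/√q` on the simplex, and `q* ∝ p^{2/3}` attains this bound.
Feasibility of `q*` is the pointwise estimate `(1 - α) p_j ≤ p_max^{-1/3} p_j / ∑ p^{2/3}
≤ p_j^{2/3} / ∑ p^{2/3}`. -/

theorem one_sub_mul_le_rpow_two_thirds_div {x M S α : ℝ} (hx : 0 < x) (hxM : x ≤ M)
    (hS : 0 ≤ S) (hα : 1 - M ^ (-(1:ℝ)/3) / S ≤ α) :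
    (1 - α) * x ≤ x ^ ((2:ℝ)/3) / S := by
  calc (1 - α) * x ≤ M ^ (-(1:ℝ)/3) / S * x := by gcongr; linarith
    _ ≤ x ^ (-(1:ℝ)/3) / S * x := by
        gcongr ?_ / S * x
        exact rpow_le_rpow_of_nonpos hx hxM (by norm_num)
    _ = x ^ ((2:ℝ)/3) / S := by rw [div_mul_eq_mul_div, ← rpow_add_one hx.ne']; norm_num

theorem mul_rpow_three_halves_div_rpow_two_thirds_div {x y : ℝ} (hx : 0 ≤ x) (hy : 0 < y) :
    y * (x ^ ((2:ℝ)/3) / y) ^ ((3:ℝ)/2) = x / √y := by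
  rw [div_rpow (by positivity) hy.le, ← rpow_mul hx, sqrt_eq_rpow,
    show (3:ℝ)/2 = 1 + 1/2 by norm_num, rpow_add hy, rpow_one]
  norm_num
  field_simp

theorem sum_rpow_two_thirds_le {ι : Type*} (s : Finset ι) {p q : ι → ℝ}
    (hp : ∀ i, 0 ≤ p i) (hq : ∀ i, 0 < q i) :
    ∑ i ∈ s, p i ^ ((2:ℝ)/3) ≤
      (∑ i ∈ s, q i) ^ ((1:ℝ)/3) * (∑ i ∈ s, p i / √(q i)) ^ ((2:ℝ)/3) := by
  have holder := inner_le_weight_mul_Lp_of_nonneg s (p := 3/2) (by norm_num) q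
    (fun i => p i ^ ((2:ℝ)/3) / q i) (fun i => (hq i).le)
    (fun i => div_nonneg (rpow_nonneg (hp i) _) (hq i).le)
  simp only [fun i => mul_div_cancel₀ (p i ^ ((2:ℝ)/3)) (hq i).ne',
    fun i => mul_rpow_three_halves_div_rpow_two_thirds_div (hp i) (hq i)] at holder
  convert holder using 3 <;> norm_num

theorem sum_rpow_two_thirds_rpow_three_halves_le {ι : Type*} (s : Finset ι) {p q : ι → ℝ}
    (hp : ∀ i, 0 ≤ p i) (hq : ∀ i, 0 < q i) :
    (∑ i ∈ s, p i ^ ((2:ℝ)/3)) ^ ((3:ℝ)/2) ≤ √(∑ i ∈ s, q i) * ∑ i ∈ s, p i / √(q i) := by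
  have hQ : 0 ≤ ∑ i ∈ s, q i := sum_nonneg fun i _ => (hq i).le
  have hT : 0 ≤ ∑ i ∈ s, p i / √(q i) := sum_nonneg fun i _ => div_nonneg (hp i) (sqrt_nonneg _)
  calc (∑ i ∈ s, p i ^ ((2:ℝ)/3)) ^ ((3:ℝ)/2)
      ≤ ((∑ i ∈ s, q i) ^ ((1:ℝ)/3) * (∑ i ∈ s, p i / √(q i)) ^ ((2:ℝ)/3)) ^ ((3:ℝ)/2) := by
        gcongr
        · exact sum_nonneg fun i _ => rpow_nonneg (hp i) _
        · exact sum_rpow_two_thirds_le s hp hq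
    _ = √(∑ i ∈ s, q i) * ∑ i ∈ s, p i / √(q i) := by
        rw [mul_rpow (by positivity) (by positivity), ← rpow_mul hQ, ← rpow_mul hT, sqrt_eq_rpow]
        norm_num

theorem div_sqrt_rpow_two_thirds_div {x S : ℝ} (hx : 0 ≤ x) (hS : 0 ≤ S) :
    x / √(x ^ ((2:ℝ)/3) / S) = x ^ ((2:ℝ)/3) * √S := by
  obtain ⟨r, hr, rfl⟩ : ∃ r, 0 ≤ r ∧ r ^ 3 = x :=
    ⟨x ^ ((1:ℝ)/3), by positivity, by rw [← rpow_natCast, ← rpow_mul hx]; norm_num⟩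
  have hr2 : (r ^ 3) ^ ((2:ℝ)/3) = r ^ 2 := by
    rw [← rpow_natCast, ← rpow_mul hr]; norm_num
  rw [hr2, sqrt_div' _ hS, sqrt_sq hr]
  rcases hr.eq_or_lt with rfl | hr0
  · simp
  rcases (sqrt_nonneg S).eq_or_lt with hS0 | hS0
  · simp [← hS0]
  field_simp

theorem sum_div_sqrt_rpow_two_thirds_div_sum {ι : Type*} (s : Finset ι) {p : ι → ℝ}
    (hp : ∀ i, 0 ≤ p i) :
    ∑ i ∈ s, p i / √(p i ^ ((2:ℝ)/3) / ∑ j ∈ s, p j ^ ((2:ℝ)/3)) =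
      (∑ i ∈ s, p i ^ ((2:ℝ)/3)) ^ ((3:ℝ)/2) := by
  have hS : 0 ≤ ∑ j ∈ s, p j ^ ((2:ℝ)/3) := sum_nonneg fun j _ => rpow_nonneg (hp j) _
  rw [sum_congr rfl fun i _ => div_sqrt_rpow_two_thirds_div (hp i) hS, ← sum_mul,
    sqrt_eq_rpow, ← rpow_one_add' hS (by norm_num)]
  norm_num

theorem threshold_budget_general {k : ℕ} (hk : 0 < k) (p : Fin k → ℝ)
    (hp : ∀ j, 0 < p j) (α : ℝ)
    (hαmin : 1 - ((Finset.univ.sup' (Finset.univ_nonempty_iff.mpr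
        (Fin.pos_iff_nonempty.mp hk)) p) ^ (-(1:ℝ)/3)) / (∑ j, (p j) ^ ((2:ℝ)/3)) ≤ α) :
    let q : Fin k → ℝ := fun j => (p j) ^ ((2:ℝ)/3) / ∑ ℓ, (p ℓ) ^ ((2:ℝ)/3)
    (∀ j, (1 - α) * p j ≤ q j) ∧
    (∀ q' : Fin k → ℝ, (∀ j, 0 < q' j) → (∑ j, q' j = 1) →
      (∀ j, (1 - α) * p j ≤ q' j) →
      (∑ j, (p j) ^ ((2:ℝ)/3)) ^ ((3:ℝ)/2) ≤ ∑ j, p j / Real.sqrt (q' j)) ∧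
    (∑ j, p j / Real.sqrt (q j)) = (∑ j, (p j) ^ ((2:ℝ)/3)) ^ ((3:ℝ)/2) := by
  have hp₀ : ∀ j, 0 ≤ p j := fun j => (hp j).le
  refine ⟨fun j => one_sub_mul_le_rpow_two_thirds_div (hp j) (le_sup' p (mem_univ j))
      (sum_nonneg fun i _ => rpow_nonneg (hp₀ i) _) hαmin,
    fun q' hq' hsum _ => ?_, sum_div_sqrt_rpow_two_thirds_div_sum univ hp₀⟩
  simpa [hsum] using sum_rpow_two_thirds_rpow_three_halves_le univ hp₀ hq'

/-- Threshold budget: for `α ≥ α_min(p) = 1 - p_max^(-1/3)/∑ j, (p j)^(2/3)`, the fully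
active optimizer `q* j = (p j)^(2/3)/∑ ℓ (p ℓ)^(2/3)` is feasible for the α-budgeted
problem, and the constrained minimum of `S_p` equals `(∑ j, (p j)^(2/3))^(3/2)`. -/
theorem threshold_budget {k : ℕ} (hk : 0 < k) (p : Fin k → ℝ)
    (hp : ∀ j, 0 < p j) (hpsum : ∑ j, p j = 1) (α : ℝ)
    (hαmin : 1 - ((Finset.univ.sup' (Finset.univ_nonempty_iff.mpr
        (Fin.pos_iff_nonempty.mp hk)) p) ^ (-(1:ℝ)/3)) / (∑ j, (p j) ^ ((2:ℝ)/3)) ≤ α)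
    (hα1 : α ≤ 1) :
    let q : Fin k → ℝ := fun j => (p j) ^ ((2:ℝ)/3) / ∑ ℓ, (p ℓ) ^ ((2:ℝ)/3)
    (∀ j, (1 - α) * p j ≤ q j) ∧
    (∀ q' : Fin k → ℝ, (∀ j, 0 < q' j) → (∑ j, q' j = 1) →
      (∀ j, (1 - α) * p j ≤ q' j) →
      (∑ j, (p j) ^ ((2:ℝ)/3)) ^ ((3:ℝ)/2) ≤ ∑ j, p j / Real.sqrt (q' j)) ∧
    (∑ j, p j / Real.sqrt (q j)) = (∑ j, (p j) ^ ((2:ℝ)/3)) ^ ((3:ℝ)/2) :=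
  threshold_budget_general hk p hp α hαmin
end

section
/- Let p be a positive probability vector in R^k, α ∈ (0,1], and let q*_α(p) be the minimizer of S_p over the α-budgeted feasible set {q in the simplex : q_j ≥ (1−α)p_j}. Then each coordinate satisfies q*_α(p)_j ≥ min_ℓ p_ℓ. In particular, all coordinates of the optimal budgeted allocation are bounded below by the smallest population weight. -/
open Finset

lemma sqrt_convex_aux {a b : ℝ} (ha : 0 < a) (hb : 0 < b) :
    1 / Real.sqrt b - 1 / Real.sqrt a ≤ (a - b) / (2 * (b * Real.sqrt b)) := by
  have sa := Real.sqrt_pos.mpr ha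
  have sb := Real.sqrt_pos.mpr hb
  have ha' : Real.sqrt a ^ 2 = a := Real.sq_sqrt ha.le
  have hb' : Real.sqrt b ^ 2 = b := Real.sq_sqrt hb.le
  rw [div_sub_div _ _ (ne_of_gt sb) (ne_of_gt sa),
    div_le_div_iff₀ (by positivity) (by positivity)]
  nlinarith [sq_nonneg (Real.sqrt a - Real.sqrt b), mul_pos sa sb,
    mul_nonneg (mul_nonneg sb.le (sq_nonneg (Real.sqrt a - Real.sqrt b)))
      (by positivity : (0:ℝ) ≤ Real.sqrt a + 2 * Real.sqrt b)]

lemma xsqrtx_lt {a b : ℝ} (ha : 0 < a) (hab : a < b) :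
    a * Real.sqrt a < b * Real.sqrt b :=
  mul_lt_mul hab (Real.sqrt_le_sqrt hab.le) (Real.sqrt_pos.mpr ha) (ha.trans hab).le

lemma exch_ring1 (P x y e : ℝ) : P * ((x - (x + e)) / (2 * y)) = -(e / 2) * (P / y) := by
  ring

lemma exch_ring2 (P x y e : ℝ) : P * ((x - (x - e)) / (2 * y)) = (e / 2) * (P / y) := by
  ring

/-- Every coordinate of the optimal α-budgeted allocation (the minimizer of
`S_p(q) = ∑ j, p j/√(q j)` over positive simplex vectors with `q j ≥ (1-α) p j`) is at
least `min_ℓ p ℓ`. -/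
theorem budgeted_allocation_coord_lower {k : ℕ} (hk : 0 < k) (p : Fin k → ℝ)
    (hp : ∀ j, 0 < p j) (hpsum : ∑ j, p j = 1) (α : ℝ) (hα0 : 0 < α) (hα1 : α ≤ 1)
    (q : Fin k → ℝ) (hq : ∀ j, 0 < q j) (hqsum : ∑ j, q j = 1)
    (hqfeas : ∀ j, (1 - α) * p j ≤ q j)
    (hqmin : ∀ q' : Fin k → ℝ, (∀ j, 0 < q' j) → (∑ j, q' j = 1) →
      (∀ j, (1 - α) * p j ≤ q' j) →
      (∑ j, p j / Real.sqrt (q j)) ≤ ∑ j, p j / Real.sqrt (q' j)) :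
    ∀ j, Finset.univ.inf' (Finset.univ_nonempty_iff.mpr
      (Fin.pos_iff_nonempty.mp hk)) p ≤ q j := by
  intro j
  by_contra hcon
  push_neg at hcon
  set m := Finset.univ.inf' (Finset.univ_nonempty_iff.mpr
      (Fin.pos_iff_nonempty.mp hk)) p with hm
  have hmle : ∀ l, m ≤ p l := fun l => Finset.inf'_le _ (Finset.mem_univ l)
  have hmpos : 0 < m := by
    obtain ⟨l0, _, hl0⟩ := Finset.exists_mem_eq_inf' (Finset.univ_nonempty_iff.mpr
      (Fin.pos_iff_nonempty.mp hk)) p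
    rw [hm, hl0]; exact hp l0
  -- find i with p i < q i
  have hex : ∃ i, p i < q i := by
    by_contra hno
    push_neg at hno
    have : (∑ l, q l) < ∑ l, p l :=
      Finset.sum_lt_sum (fun l _ => hno l) ⟨j, Finset.mem_univ j, lt_of_lt_of_le hcon (hmle j)⟩
    rw [hqsum, hpsum] at this; exact lt_irrefl 1 this
  obtain ⟨i, hi⟩ := hex
  have hij : i ≠ j := by
    intro h; subst h
    exact absurd (lt_trans hi (lt_of_lt_of_le hcon (hmle i))) (lt_irrefl _)
  set ε := min ((m - q j) / 2) ((q i - p i) / 2) with hε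
  have hε1 : ε ≤ (m - q j) / 2 := min_le_left _ _
  have hε2 : ε ≤ (q i - p i) / 2 := min_le_right _ _
  have hεpos : 0 < ε := lt_min (by linarith) (by linarith)
  have hb1 : q j + ε < m := by linarith
  have hb2 : p i < q i - ε := by linarith
  have hb1pos : 0 < q j + ε := by linarith [hq j]
  have hb2pos : 0 < q i - ε := lt_trans (hp i) hb2
  set q' : Fin k → ℝ := fun l => if l = j then q j + ε else if l = i then q i - ε else q l
    with hq'
  have hq'j : q' j = q j + ε := by simp [hq']
  have hq'i : q' i = q i - ε := by simp [hq', hij]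
  have hq'other : ∀ l, l ≠ j → l ≠ i → q' l = q l := by
    intro l h1 h2; simp [hq', h1, h2]
  have hsplit : ∀ f : Fin k → ℝ,
      ∑ l, f l = f j + (f i + ∑ l ∈ (Finset.univ.erase j).erase i, f l) := by
    intro f
    rw [Finset.add_sum_erase _ f (Finset.mem_erase.mpr ⟨hij, Finset.mem_univ i⟩),
      Finset.add_sum_erase _ f (Finset.mem_univ j)]
  have hrest : ∀ l ∈ (Finset.univ.erase j).erase i, q' l = q l := by
    intro l hl
    obtain ⟨h2, h1, _⟩ := Finset.mem_erase.mp hl |>.imp id Finset.mem_erase.mp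
    exact hq'other l h1 h2
  -- q' is feasible
  have hq'pos : ∀ l, 0 < q' l := by
    intro l
    by_cases h1 : l = j
    · subst h1; rw [hq'j]; exact hb1pos
    by_cases h2 : l = i
    · subst h2; rw [hq'i]; exact hb2pos
    · rw [hq'other l h1 h2]; exact hq l
  have hq'sum : ∑ l, q' l = 1 := by
    rw [hsplit q', hq'j, hq'i, Finset.sum_congr rfl hrest]
    have := hsplit q
    linarith [hqsum]
  have hq'feas : ∀ l, (1 - α) * p l ≤ q' l := by
    intro l
    by_cases h1 : l = j
    · rw [h1, hq'j]; linarith [hqfeas j]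
    by_cases h2 : l = i
    · rw [h2, hq'i]
      nlinarith [hp i, hb2]
    · rw [hq'other l h1 h2]; exact hqfeas l
  -- strict decrease of the objective
  have hkey : p i / ((q i - ε) * Real.sqrt (q i - ε))
      < p j / ((q j + ε) * Real.sqrt (q j + ε)) := by
    have hpi := hp i
    have h1 : p i / ((q i - ε) * Real.sqrt (q i - ε)) < p i / (p i * Real.sqrt (p i)) :=
      div_lt_div_of_pos_left hpi (by positivity) (xsqrtx_lt hpi hb2)
    have h2 : p i / (p i * Real.sqrt (p i)) = 1 / Real.sqrt (p i) := by
      rw [div_eq_div_iff (by positivity) (by positivity)]; ring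
    have h3 : (1 : ℝ) / Real.sqrt (p i) ≤ 1 / Real.sqrt m :=
      one_div_le_one_div_of_le (Real.sqrt_pos.mpr hmpos) (Real.sqrt_le_sqrt (hmle i))
    have h4 : (1 : ℝ) / Real.sqrt m = m / (m * Real.sqrt m) := by
      rw [div_eq_div_iff (by positivity) (by positivity)]; ring
    have h5 : m / (m * Real.sqrt m) < m / ((q j + ε) * Real.sqrt (q j + ε)) :=
      div_lt_div_of_pos_left hmpos (by positivity) (xsqrtx_lt hb1pos hb1)
    have h6 : m / ((q j + ε) * Real.sqrt (q j + ε))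
        ≤ p j / ((q j + ε) * Real.sqrt (q j + ε)) := by
      gcongr
      exact hmle j
    calc p i / ((q i - ε) * Real.sqrt (q i - ε)) < p i / (p i * Real.sqrt (p i)) := h1
      _ = 1 / Real.sqrt (p i) := h2
      _ ≤ 1 / Real.sqrt m := h3
      _ = m / (m * Real.sqrt m) := h4
      _ < m / ((q j + ε) * Real.sqrt (q j + ε)) := h5
      _ ≤ p j / ((q j + ε) * Real.sqrt (q j + ε)) := h6
  have hΔj : p j / Real.sqrt (q' j) - p j / Real.sqrt (q j)
      ≤ -(ε / 2) * (p j / ((q j + ε) * Real.sqrt (q j + ε))) := by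
    rw [hq'j]
    have h := sqrt_convex_aux (hq j) hb1pos
    have h' := mul_le_mul_of_nonneg_left h (hp j).le
    have e1 : p j * (1 / Real.sqrt (q j + ε) - 1 / Real.sqrt (q j))
        = p j / Real.sqrt (q j + ε) - p j / Real.sqrt (q j) := by ring
    have e2 := exch_ring1 (p j) (q j) ((q j + ε) * Real.sqrt (q j + ε)) ε
    rw [e1, e2] at h'
    exact h'
  have hΔi : p i / Real.sqrt (q' i) - p i / Real.sqrt (q i)
      ≤ (ε / 2) * (p i / ((q i - ε) * Real.sqrt (q i - ε))) := by
    rw [hq'i]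
    have h := sqrt_convex_aux (hq i) hb2pos
    have h' := mul_le_mul_of_nonneg_left h (hp i).le
    have e1 : p i * (1 / Real.sqrt (q i - ε) - 1 / Real.sqrt (q i))
        = p i / Real.sqrt (q i - ε) - p i / Real.sqrt (q i) := by ring
    have e2 := exch_ring2 (p i) (q i) ((q i - ε) * Real.sqrt (q i - ε)) ε
    rw [e1, e2] at h'
    exact h'
  have hdec : ∑ l, p l / Real.sqrt (q' l) < ∑ l, p l / Real.sqrt (q l) := by
    rw [hsplit (fun l => p l / Real.sqrt (q' l)), hsplit (fun l => p l / Real.sqrt (q l))]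
    have heq : ∑ l ∈ (Finset.univ.erase j).erase i, p l / Real.sqrt (q' l)
        = ∑ l ∈ (Finset.univ.erase j).erase i, p l / Real.sqrt (q l) := by
      refine Finset.sum_congr rfl fun l hl => ?_
      rw [hrest l hl]
    rw [heq]
    have hmul : (ε / 2) * (p i / ((q i - ε) * Real.sqrt (q i - ε)))
        < (ε / 2) * (p j / ((q j + ε) * Real.sqrt (q j + ε))) :=
      mul_lt_mul_of_pos_left hkey (by linarith)
    linarith [hΔj, hΔi]
  exact absurd (hqmin q' hq'pos hq'sum hq'feas) (not_le.mpr hdec)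
end
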